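/- arXiv:2511.18831 — 2 statements merged into one kernel-verified Lean document; each statement's English description precedes it below -/
import Mathlib

section
/- Let K ≥ 1 and let q₁, …, q_K be real numbers (logits). Let g₁, …, g_K be independent, identically distributed real random variables each following the standard Gumbel distribution, i.e. with cumulative distribution function F(x) = exp(−exp(−x)). Then for every index j, the probability that q_j + g_j is strictly greater than q_i + g_i for all i ≠ j equals the softmax probability exp(q_j) / ∑_{i=1}^{K} exp(q_i). -/
/-!
Write `F t = exp (-exp (-t))` for the Gumbel CDF. Conditioning on `g j = t`, independence
gives the probability as `∫ ∏_{i ≠ j} F (t + q j - q i) dF(t)`, and since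
`F (t + s) = F t ^ exp (-s)` the product is `F t ^ c` with `c = ∑_{i ≠ j} exp (q i - q j)`.
Finally `F ^ (1 + c)` is an antiderivative of `(1 + c) F ^ c F'`, so the integral is
`1 / (1 + c)`, which is the softmax weight of `j`.
-/

open MeasureTheory ProbabilityTheory Real Set
open scoped ENNReal

section DoubleExponential

variable {a : ℝ}

lemma hasDerivAt_exp_neg_mul_exp_neg (t : ℝ) :
    HasDerivAt (fun t => exp (-(a * exp (-t)))) (a * exp (-t) * exp (-(a * exp (-t)))) t := by
  convert (((hasDerivAt_neg t).exp.const_mul a).fun_neg).exp using 1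
  ring

lemma monotone_exp_neg_mul_exp_neg (ha : 0 ≤ a) : Monotone fun t => exp (-(a * exp (-t))) :=
  fun _ _ hst => exp_le_exp.2 <| neg_le_neg <| mul_le_mul_of_nonneg_left
    (exp_le_exp.2 (neg_le_neg hst)) ha

lemma exp_neg_mul_exp_neg_eq_comp :
    (fun t => exp (-(a * exp (-t)))) = exp ∘ (fun u => -u) ∘ (a * ·) ∘ exp ∘ (fun t => -t) :=
  rfl

lemma image_Iic_exp_neg_mul_exp_neg (ha : 0 < a) (x : ℝ) :
    (fun t => exp (-(a * exp (-t)))) '' Iic x = Ioc 0 (exp (-(a * exp (-x)))) := by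
  rw [exp_neg_mul_exp_neg_eq_comp, image_comp, image_comp, image_comp, image_comp]
  simp [image_mul_left_Ici ha, image_exp_Iic]

lemma image_univ_exp_neg_mul_exp_neg (ha : 0 < a) :
    (fun t => exp (-(a * exp (-t)))) '' univ = Ioo 0 1 := by
  rw [exp_neg_mul_exp_neg_eq_comp, image_univ, range_comp, range_comp, range_comp, range_comp,
    neg_surjective.range_eq, image_univ, range_exp, image_mul_left_Ioi ha]
  simp [image_exp_Iio]

lemma setLIntegral_Iic_deriv_exp_neg_mul_exp_neg (ha : 0 < a) (x : ℝ) :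
    ∫⁻ t in Iic x, ENNReal.ofReal (a * exp (-t) * exp (-(a * exp (-t))))
      = ENNReal.ofReal (exp (-(a * exp (-x)))) := by
  rw [lintegral_deriv_eq_volume_image_of_monotoneOn measurableSet_Iic
      (fun t _ => (hasDerivAt_exp_neg_mul_exp_neg t).hasDerivWithinAt)
      ((monotone_exp_neg_mul_exp_neg ha.le).monotoneOn _),
    image_Iic_exp_neg_mul_exp_neg ha, Real.volume_Ioc, sub_zero]

lemma lintegral_deriv_exp_neg_mul_exp_neg (ha : 0 < a) :
    ∫⁻ t, ENNReal.ofReal (a * exp (-t) * exp (-(a * exp (-t)))) = 1 := by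
  rw [← setLIntegral_univ, lintegral_deriv_eq_volume_image_of_monotoneOn MeasurableSet.univ
      (fun t _ => (hasDerivAt_exp_neg_mul_exp_neg t).hasDerivWithinAt)
      ((monotone_exp_neg_mul_exp_neg ha.le).monotoneOn _),
    image_univ_exp_neg_mul_exp_neg ha, Real.volume_Ioo]
  simp

end DoubleExponential

noncomputable def gumbelMeasure : Measure ℝ :=
  volume.withDensity fun t => ENNReal.ofReal (exp (-t - exp (-t)))

lemma exp_neg_sub_exp_neg_eq (t : ℝ) :
    exp (-t - exp (-t)) = 1 * exp (-t) * exp (-(1 * exp (-t))) := by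
  rw [one_mul, ← exp_add, sub_eq_add_neg]

lemma gumbelMeasure_Iic (x : ℝ) : gumbelMeasure (Iic x) = ENNReal.ofReal (exp (-exp (-x))) := by
  rw [gumbelMeasure, withDensity_apply _ measurableSet_Iic]
  simp_rw [exp_neg_sub_exp_neg_eq]
  rw [setLIntegral_Iic_deriv_exp_neg_mul_exp_neg one_pos, one_mul]

instance : IsProbabilityMeasure gumbelMeasure := by
  constructor
  rw [gumbelMeasure, withDensity_apply _ MeasurableSet.univ, setLIntegral_univ]
  simp_rw [exp_neg_sub_exp_neg_eq]
  exact lintegral_deriv_exp_neg_mul_exp_neg one_pos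

instance : NullSingletonClass gumbelMeasure :=
  ⟨fun x => withDensity_absolutelyContinuous _ _ (measure_singleton x)⟩

lemma gumbelMeasure_Iio (x : ℝ) : gumbelMeasure (Iio x) = ENNReal.ofReal (exp (-exp (-x))) := by
  rw [measure_congr Iio_ae_eq_Iic, gumbelMeasure_Iic]

lemma lintegral_exp_neg_mul_exp_neg_gumbelMeasure {c : ℝ} (hc : 0 ≤ c) :
    ∫⁻ t, ENNReal.ofReal (exp (-(c * exp (-t)))) ∂gumbelMeasure = ENNReal.ofReal (1 + c)⁻¹ := by
  have hc' : 0 < 1 + c := by linarith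
  have hdens : ∀ t, ENNReal.ofReal (exp (-t - exp (-t))) * ENNReal.ofReal (exp (-(c * exp (-t))))
      = ENNReal.ofReal (1 + c)⁻¹ *
          ENNReal.ofReal ((1 + c) * exp (-t) * exp (-((1 + c) * exp (-t)))) := fun t => by
    rw [← ENNReal.ofReal_mul (by positivity), ← ENNReal.ofReal_mul (by positivity)]
    congr 1
    field_simp
    rw [← exp_add, ← exp_add]
    ring_nf
  rw [gumbelMeasure, lintegral_withDensity_eq_lintegral_mul₀ (by fun_prop) (by fun_prop)]
  simp_rw [Pi.mul_apply, hdens]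
  rw [lintegral_const_mul _ (by fun_prop), lintegral_deriv_exp_neg_mul_exp_neg hc', mul_one]

lemma map_eq_gumbelMeasure_of_cdf {Ω : Type*} [MeasurableSpace Ω] {P : Measure Ω}
    [IsFiniteMeasure P] {X : Ω → ℝ} (hX : Measurable X)
    (hcdf : ∀ x, P {ω | X ω ≤ x} = ENNReal.ofReal (exp (-exp (-x)))) :
    P.map X = gumbelMeasure :=
  Measure.ext_of_Iic _ _ fun x => by
    rw [Measure.map_apply hX measurableSet_Iic, gumbelMeasure_Iic]
    exact hcdf x

lemma prod_gumbelMeasure_Iio_add {ι : Type*} [Fintype ι] (t : ℝ) (b : ι → ℝ) :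
    ∏ i, gumbelMeasure (Iio (t + b i))
      = ENNReal.ofReal (exp (-((∑ i, exp (-b i)) * exp (-t)))) := by
  simp_rw [gumbelMeasure_Iio]
  rw [← ENNReal.ofReal_prod_of_nonneg fun _ _ => (exp_pos _).le, ← exp_sum, Finset.sum_mul,
    ← Finset.sum_neg_distrib]
  simp_rw [← exp_add, neg_add, add_comm (-t)]

lemma measurableSet_ofPred_forall_add_lt_add {ι : Type*} [Countable ι] (q : ι → ℝ) (j : ι) :
    MeasurableSet {x : ι → ℝ | ∀ i, i ≠ j → q i + x i < q j + x j} := by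
  simp only [ofPred_forall]
  exact .iInter fun i => .iInter fun _ =>
    measurableSet_lt (by fun_prop) (by fun_prop)

lemma measure_pi_ofPred_forall_add_lt_add {n : ℕ} (μ : Fin (n + 1) → Measure ℝ)
    [∀ i, SigmaFinite (μ i)] (q : Fin (n + 1) → ℝ) (j : Fin (n + 1)) :
    Measure.pi μ {x | ∀ i, i ≠ j → q i + x i < q j + x j}
      = ∫⁻ t, ∏ k, μ (j.succAbove k) (Iio (t + (q j - q (j.succAbove k)))) ∂μ j := by
  set e := MeasurableEquiv.piFinSuccAbove (fun _ => ℝ) j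
  set T : Set (ℝ × (Fin n → ℝ)) := {p | ∀ k, q (j.succAbove k) + p.2 k < q j + p.1}
  have hT : MeasurableSet T := by
    simp only [T, ofPred_forall]
    exact .iInter fun k => measurableSet_lt (by fun_prop) (by fun_prop)
  have hpre : {x | ∀ i, i ≠ j → q i + x i < q j + x j} = e ⁻¹' T := by
    ext x
    rw [mem_ofPred_eq, j.forall_iff_succAbove]
    simp [T, e, MeasurableEquiv.piFinSuccAbove, Fin.insertNthEquiv, Fin.removeNth]
  have hsection :
      ∀ t, Prod.mk t ⁻¹' T = univ.pi fun k => Iio (t + (q j - q (j.succAbove k))) := by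
    intro t
    ext y
    simp only [T, mem_preimage, mem_ofPred_eq, mem_pi, mem_univ, true_implies, mem_Iio]
    exact forall_congr' fun k => by constructor <;> intro h <;> linarith
  rw [hpre, (measurePreserving_piFinSuccAbove μ j).measure_preimage hT.nullMeasurableSet,
    Measure.prod_apply hT]
  simp_rw [hsection, Measure.pi_pi]

lemma inv_one_add_sum_exp_eq_softmax {n : ℕ} (q : Fin (n + 1) → ℝ) (j : Fin (n + 1)) :
    (1 + ∑ k, exp (-(q j - q (j.succAbove k))))⁻¹ = exp (q j) / ∑ i, exp (q i) := by
  rw [Fin.sum_univ_succAbove _ j]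
  simp_rw [neg_sub, exp_sub]
  rw [← Finset.sum_div]
  field_simp

theorem gumbel_max_trick_general
    {Ω : Type*} [MeasurableSpace Ω] (P : Measure Ω) [IsProbabilityMeasure P]
    (K : ℕ) (q : Fin K → ℝ) (g : Fin K → Ω → ℝ)
    (hmeas : ∀ i, Measurable (g i))
    (hindep : iIndepFun g P)
    (hcdf : ∀ i, ∀ x : ℝ, P {ω | g i ω ≤ x} = ENNReal.ofReal (Real.exp (-Real.exp (-x))))
    (j : Fin K) :
    P {ω | ∀ i, i ≠ j → q i + g i ω < q j + g j ω}
      = ENNReal.ofReal (Real.exp (q j) / ∑ i, Real.exp (q i)) := by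
  obtain ⟨n, rfl⟩ := Nat.exists_eq_add_one_of_ne_zero j.pos.ne'
  have hjoint : P.map (fun ω i => g i ω) = Measure.pi fun _ => gumbelMeasure := by
    rw [(iIndepFun_iff_map_fun_eq_pi_map fun i => (hmeas i).aemeasurable).1 hindep]
    simp_rw [map_eq_gumbelMeasure_of_cdf (hmeas _) (hcdf _)]
  calc P {ω | ∀ i, i ≠ j → q i + g i ω < q j + g j ω}
      = P.map (fun ω i => g i ω) {x | ∀ i, i ≠ j → q i + x i < q j + x j} :=
        (Measure.map_apply (measurable_pi_lambda _ hmeas)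
          (measurableSet_ofPred_forall_add_lt_add q j)).symm
    _ = ∫⁻ t, ENNReal.ofReal (exp (-((∑ k, exp (-(q j - q (j.succAbove k)))) * exp (-t))))
          ∂gumbelMeasure := by
        simp_rw [hjoint, measure_pi_ofPred_forall_add_lt_add, prod_gumbelMeasure_Iio_add]
    _ = ENNReal.ofReal (exp (q j) / ∑ i, exp (q i)) := by
        rw [lintegral_exp_neg_mul_exp_neg_gumbelMeasure (by positivity),
          inv_one_add_sum_exp_eq_softmax]

/-- **The Gumbel-Max Trick.** Let `q 1, …, q K` be real logits and `g 1, …, g K` be i.i.d.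
random variables with the standard Gumbel distribution, whose CDF is
`F x = exp (-exp (-x))`. Then for every index `j`, the probability that `q j + g j`
strictly exceeds `q i + g i` for all `i ≠ j` equals the softmax probability
`exp (q j) / ∑ i, exp (q i)`. -/
theorem gumbel_max_trick
    {Ω : Type*} [MeasurableSpace Ω] (P : Measure Ω) [IsProbabilityMeasure P]
    (K : ℕ) (hK : 1 ≤ K) (q : Fin K → ℝ) (g : Fin K → Ω → ℝ)
    (hmeas : ∀ i, Measurable (g i))
    (hindep : iIndepFun g P)
    (hcdf : ∀ i, ∀ x : ℝ, P {ω | g i ω ≤ x} = ENNReal.ofReal (Real.exp (-Real.exp (-x))))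
    (j : Fin K) :
    P {ω | ∀ i, i ≠ j → q i + g i ω < q j + g j ω}
      = ENNReal.ofReal (Real.exp (q j) / ∑ i, Real.exp (q i)) :=
  gumbel_max_trick_general P K q g hmeas hindep hcdf j
end

section
/- Let K ≥ 1 and let v ∈ ℝ^K have a unique maximizing coordinate j, with gap δ = min_{i ≠ j} (v_j − v_i) > 0. Define the tempered softmax y^s(τ) ∈ ℝ^K by y^s(τ)_i = exp(v_i/τ) / ∑_{i'=1}^{K} exp(v_{i'}/τ) for temperature τ > 0, and let e_j ∈ ℝ^K denote the one-hot vector with 1 in coordinate j and 0 elsewhere. Then there exists a constant C₁ ≥ 0, depending only on K and δ, such that ‖y^s(τ) − e_j‖ ≤ C₁ · τ for all τ > 0; one may take C₁ = 2(K−1)/(e·δ) for the ℓ¹ norm. -/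
open Real Finset

/-- Let `v ∈ ℝ^K` (`K ≥ 1`) have a unique maximizing coordinate `j`, with gap
`δ = min_{i ≠ j} (v j - v i) > 0`. Then the tempered softmax
`y^s(τ)_i = exp (v i / τ) / ∑ i', exp (v i' / τ)` converges to the one-hot vector
`e_j` linearly in the temperature: in the `ℓ¹` norm,
`‖y^s(τ) - e_j‖₁ ≤ C₁ * τ` for all `τ > 0`, with the explicit constant
`C₁ = 2 (K - 1) / (e * δ)` depending only on `K` and `δ`. -/
theorem tempered_softmax_linear_convergence
    (K : ℕ) (hK : 1 ≤ K) (v : Fin K → ℝ) (j : Fin K) (δ : ℝ)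
    (hmax : ∀ i : Fin K, i ≠ j → v i < v j)
    (hδ : 0 < δ)
    (hgap : ∀ i : Fin K, i ≠ j → δ ≤ v j - v i) :
    ∀ τ : ℝ, 0 < τ →
      ∑ i : Fin K,
          |Real.exp (v i / τ) / (∑ i' : Fin K, Real.exp (v i' / τ)) -
            (if i = j then (1 : ℝ) else 0)|
        ≤ (2 * ((K : ℝ) - 1) / (Real.exp 1 * δ)) * τ := by
  intro τ hτ
  set S : ℝ := ∑ i' : Fin K, Real.exp (v i' / τ) with hS
  have hSpos : 0 < S :=
    Finset.sum_pos (fun i _ => Real.exp_pos _) ⟨j, Finset.mem_univ j⟩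
  have hej : Real.exp (v j / τ) ≤ S :=
    Finset.single_le_sum (fun i _ => (Real.exp_pos (v i / τ)).le) (Finset.mem_univ j)
  set E : ℝ := Real.exp (-(δ / τ)) with hE
  have hEpos : 0 < E := Real.exp_pos _
  -- key calculus fact: E ≤ τ / (e δ)
  have hkey : E ≤ τ / (Real.exp 1 * δ) := by
    have hx : 0 < δ / τ := div_pos hδ hτ
    have h1 : δ / τ ≤ Real.exp (δ / τ - 1) := by
      nlinarith [Real.add_one_le_exp (δ / τ - 1)]
    have hsplit : Real.exp (δ / τ) = Real.exp (δ / τ - 1) * Real.exp 1 := by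
      rw [← Real.exp_add]; ring_nf
    have h2 : Real.exp 1 * δ ≤ τ * Real.exp (δ / τ) := by
      rw [hsplit]
      have hδτ : δ = (δ / τ) * τ := by field_simp
      nlinarith [Real.exp_pos 1, mul_le_mul_of_nonneg_right h1 hτ.le]
    rw [hE, Real.exp_neg, inv_eq_one_div,
      div_le_div_iff₀ (Real.exp_pos _) (by positivity)]
    nlinarith
  -- bound each off-diagonal softmax value by E
  have hterm : ∀ i : Fin K, i ≠ j → Real.exp (v i / τ) / S ≤ E := by
    intro i hi
    have h1 : Real.exp (v i / τ) / S ≤ Real.exp (v i / τ) / Real.exp (v j / τ) := by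
      gcongr
    have h2 : Real.exp (v i / τ) / Real.exp (v j / τ) = Real.exp ((v i - v j) / τ) := by
      rw [← Real.exp_sub]; ring_nf
    have h3 : (v i - v j) / τ ≤ -(δ / τ) := by
      rw [← neg_div]
      gcongr
      linarith [hgap i hi]
    calc Real.exp (v i / τ) / S ≤ Real.exp ((v i - v j) / τ) := h2 ▸ h1
      _ ≤ E := Real.exp_le_exp.mpr h3
  -- split the sum
  have hcard : ((Finset.univ.erase j).card : ℝ) = (K : ℝ) - 1 := by
    rw [Finset.card_erase_of_mem (Finset.mem_univ j)]
    simp [Nat.cast_sub hK]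
  have hsum_erase : ∑ i ∈ Finset.univ.erase j, Real.exp (v i / τ) / S ≤ ((K : ℝ) - 1) * E := by
    calc ∑ i ∈ Finset.univ.erase j, Real.exp (v i / τ) / S
        ≤ ∑ _i ∈ Finset.univ.erase j, E :=
          Finset.sum_le_sum (fun i hi => hterm i (Finset.ne_of_mem_erase hi))
      _ = ((K : ℝ) - 1) * E := by rw [Finset.sum_const, nsmul_eq_mul, hcard]
  have hSsplit : Real.exp (v j / τ) + ∑ i ∈ Finset.univ.erase j, Real.exp (v i / τ) = S := by
    rw [hS]; exact Finset.add_sum_erase Finset.univ (fun i => Real.exp (v i / τ)) (Finset.mem_univ j)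
  have htermj : |Real.exp (v j / τ) / S - 1| ≤ ((K : ℝ) - 1) * E := by
    have h1 : Real.exp (v j / τ) / S ≤ 1 := div_le_one_of_le₀ hej hSpos.le
    rw [abs_of_nonpos (by linarith)]
    have h2 : 1 - Real.exp (v j / τ) / S = (S - Real.exp (v j / τ)) / S := by
      field_simp
    have h3 : (S - Real.exp (v j / τ)) / S
        = ∑ i ∈ Finset.univ.erase j, Real.exp (v i / τ) / S := by
      rw [← Finset.sum_div]
      congr 1
      linarith [hSsplit]
    have : -(Real.exp (v j / τ) / S - 1) = 1 - Real.exp (v j / τ) / S := by ring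
    rw [this, h2, h3]
    exact hsum_erase
  have hsplit2 : ∑ i : Fin K,
      |Real.exp (v i / τ) / S - (if i = j then (1 : ℝ) else 0)|
      = |Real.exp (v j / τ) / S - 1|
        + ∑ i ∈ Finset.univ.erase j,
            |Real.exp (v i / τ) / S - (if i = j then (1 : ℝ) else 0)| := by
    rw [← Finset.add_sum_erase _ _ (Finset.mem_univ j), if_pos rfl]
  have hrest : ∑ i ∈ Finset.univ.erase j,
      |Real.exp (v i / τ) / S - (if i = j then (1 : ℝ) else 0)|
      ≤ ((K : ℝ) - 1) * E := by
    calc ∑ i ∈ Finset.univ.erase j,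
        |Real.exp (v i / τ) / S - (if i = j then (1 : ℝ) else 0)|
        = ∑ i ∈ Finset.univ.erase j, Real.exp (v i / τ) / S := by
          apply Finset.sum_congr rfl
          intro i hi
          rw [if_neg (Finset.ne_of_mem_erase hi), sub_zero,
            abs_of_pos (div_pos (Real.exp_pos _) hSpos)]
      _ ≤ ((K : ℝ) - 1) * E := hsum_erase
  have hK1 : (0 : ℝ) ≤ (K : ℝ) - 1 := by
    have : (1 : ℝ) ≤ (K : ℝ) := by exact_mod_cast hK
    linarith
  calc ∑ i : Fin K, |Real.exp (v i / τ) / S - (if i = j then (1 : ℝ) else 0)|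
      ≤ ((K : ℝ) - 1) * E + ((K : ℝ) - 1) * E := by
        rw [hsplit2]; exact add_le_add htermj hrest
    _ = 2 * ((K : ℝ) - 1) * E := by ring
    _ ≤ 2 * ((K : ℝ) - 1) * (τ / (Real.exp 1 * δ)) := by
        apply mul_le_mul_of_nonneg_left hkey (by linarith)
    _ = (2 * ((K : ℝ) - 1) / (Real.exp 1 * δ)) * τ := by ring
end
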